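/- Let k ≥ 1 be an integer and x₁,…,x_k irrational real numbers. Then there exists an integer A with ⌊(k+1)/2⌋ ≤ A ≤ k such that for all positive integers n and m₀ there exist infinitely many even positive integers T that are multiples of n satisfying ∑_{j=1}^{k} ( ⌈(m+T)·x_j⌉ − ⌈m·x_j⌉ − ⌈T·x_j⌉ ) = A − k for every integer m with 1 ≤ m ≤ m₀. -/

import Mathlib

open Finset
lemma fract_pos_of_irrational {y : ℝ} (hy : Irrational y) : 0 < Int.fract y := by
  rcases lt_or_eq_of_le (Int.fract_nonneg y) with h | h
  · exact h
  · exfalso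
    have : y = (⌊y⌋ : ℝ) := by
      have := Int.floor_add_fract y
      rw [← h] at this; linarith
    exact hy.ne_int ⌊y⌋ this

lemma ceil_of_irrational {y : ℝ} (hy : Irrational y) : ⌈y⌉ = ⌊y⌋ + 1 := by
  rw [Int.ceil_eq_iff]
  constructor
  · push_cast
    have h1 : (⌊y⌋ : ℝ) ≤ y := Int.floor_le y
    have h2 : y ≠ (⌊y⌋ : ℝ) := hy.ne_int ⌊y⌋
    simpa using lt_of_le_of_ne h1 (Ne.symm h2)
  · push_cast
    exact (Int.lt_floor_add_one y).le

lemma floor_add_of_lt {a b : ℝ} (h : Int.fract a + Int.fract b < 1) :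
    ⌊a + b⌋ = ⌊a⌋ + ⌊b⌋ := by
  have ha := Int.floor_add_fract a
  have hb := Int.floor_add_fract b
  have h1 := Int.fract_nonneg a
  have h2 := Int.fract_nonneg b
  rw [Int.floor_eq_iff]
  constructor <;> push_cast <;> linarith

lemma floor_add_of_gt {a b : ℝ} (h : 1 ≤ Int.fract a + Int.fract b) :
    ⌊a + b⌋ = ⌊a⌋ + ⌊b⌋ + 1 := by
  have ha := Int.floor_add_fract a
  have hb := Int.floor_add_fract b
  have h1 := Int.fract_lt_one a
  have h2 := Int.fract_lt_one b
  rw [Int.floor_eq_iff]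
  constructor <;> push_cast <;> linarith

lemma ceil_sub_lt {a b : ℝ} (ha : Irrational a) (hb : Irrational b)
    (hab : Irrational (a + b)) (h : Int.fract a + Int.fract b < 1) :
    ⌈a + b⌉ - ⌈a⌉ - ⌈b⌉ = -1 := by
  rw [ceil_of_irrational ha, ceil_of_irrational hb, ceil_of_irrational hab,
    floor_add_of_lt h]; ring

lemma ceil_sub_gt {a b : ℝ} (ha : Irrational a) (hb : Irrational b)
    (hab : Irrational (a + b)) (h : 1 ≤ Int.fract a + Int.fract b) :
    ⌈a + b⌉ - ⌈a⌉ - ⌈b⌉ = 0 := by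
  rw [ceil_of_irrational ha, ceil_of_irrational hb, ceil_of_irrational hab,
    floor_add_of_gt h]; ring

lemma fract_sub_fract (a b : ℝ) :
    Int.fract (a - b) = Int.fract (Int.fract a - Int.fract b) := by
  have : a - b = (Int.fract a - Int.fract b) + ((⌊a⌋ : ℝ) - (⌊b⌋ : ℝ)) := by
    have := Int.floor_add_fract a
    have := Int.floor_add_fract b
    ring_nf
    linarith
  rw [this]
  rw [show ((⌊a⌋ : ℝ) - (⌊b⌋ : ℝ)) = ((⌊a⌋ - ⌊b⌋ : ℤ) : ℝ) by push_cast; ring]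
  exact Int.fract_add_intCast _ _

lemma recur (k q : ℕ) (hq : 0 < q) (x : ℕ → ℝ) (δ : ℝ) (hδ : 0 < δ) :
    {T : ℕ | 0 < T ∧ q ∣ T ∧ ∀ j ∈ Finset.Icc 1 k,
      Int.fract ((T : ℝ) * x j) < δ ∨ 1 - δ < Int.fract ((T : ℝ) * x j)}.Infinite := by
  rcases le_or_gt 1 δ with hδ1 | hδ1
  · refine Set.infinite_of_injective_forall_mem (f := fun i : ℕ => q * (i + 1)) ?_ ?_
    · intro a b hab
      simp only [] at hab
      have := Nat.eq_of_mul_eq_mul_left hq hab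
      omega
    · intro i
      exact ⟨by positivity, ⟨i + 1, rfl⟩,
        fun j _ => Or.inl (lt_of_lt_of_le (Int.fract_lt_one _) hδ1)⟩
  · have key : ∀ B : ℕ, ∃ T, B < T ∧ 0 < T ∧ q ∣ T ∧ ∀ j ∈ Finset.Icc 1 k,
        Int.fract ((T : ℝ) * x j) < δ ∨ 1 - δ < Int.fract ((T : ℝ) * x j) := by
      intro B
      obtain ⟨N, hN⟩ := exists_nat_gt (1 / δ)
      have hNR : (0:ℝ) < N := by
        have h0 : (0:ℝ) < 1 / δ := by positivity
        linarith
      have hN0 : 0 < N := by exact_mod_cast hNR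
      have hNδ : 1 / (N:ℝ) < δ := by
        rw [div_lt_iff₀ hNR]
        have := (div_lt_iff₀ hδ).mp hN
        have hc := mul_comm δ (N:ℝ)
        linarith
      set t0 := B + 1 with ht0
      set F : ℕ → (Fin k → Fin N) := fun i j =>
        ⟨(⌊(N:ℝ) * Int.fract (((q*(t0*i) : ℕ) : ℝ) * x (j.1+1))⌋).toNat % N,
          Nat.mod_lt _ hN0⟩ with hF
      obtain ⟨i, hi, i', hi', hne, heq⟩ :=
        Finset.exists_ne_map_eq_of_card_lt_of_maps_to (s := Finset.Icc 1 (N^k+1))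
          (t := (Finset.univ : Finset (Fin k → Fin N)))
          (by simp [Nat.card_Icc]) (fun a _ => Finset.mem_univ (F a))
      wlog hlt : i < i' generalizing i i'
      · exact this i' hi' i hi (Ne.symm hne) heq.symm (by omega)
      set T := q * (t0 * (i' - i)) with hT
      have hkey : q * (t0 * i) + T = q * (t0 * i') := by
        have h1 : i + (i' - i) = i' := by omega
        calc q * (t0 * i) + q * (t0 * (i' - i)) = q * (t0 * (i + (i' - i))) := by ring
          _ = q * (t0 * i') := by rw [h1]
      have hTpos : B < T := by
        have h1 : 1 ≤ i' - i := by omega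
        calc B < t0 := by omega
          _ ≤ t0 * (i' - i) := Nat.le_mul_of_pos_right _ (by omega)
          _ ≤ q * (t0 * (i' - i)) := Nat.le_mul_of_pos_left _ hq
      refine ⟨T, hTpos, by omega, ⟨_, rfl⟩, ?_⟩
      intro j hj
      rw [Finset.mem_Icc] at hj
      have hjf : j - 1 < k := by omega
      have hcong := congrFun heq ⟨j - 1, hjf⟩
      simp only [hF, Fin.mk.injEq] at hcong
      have hj1 : (j - 1) + 1 = j := by omega
      rw [hj1] at hcong
      set a : ℝ := ((q*(t0*i) : ℕ) : ℝ) * x j with ha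
      set b : ℝ := ((q*(t0*i') : ℕ) : ℝ) * x j with hb
      -- floors are equal
      have hfl : ∀ y : ℝ, (0:ℤ) ≤ ⌊(N:ℝ) * Int.fract y⌋ ∧ ⌊(N:ℝ) * Int.fract y⌋ < N := by
        intro y
        constructor
        · exact Int.floor_nonneg.mpr (mul_nonneg hNR.le (Int.fract_nonneg _))
        · exact Int.floor_lt.mpr (by
            have := Int.fract_lt_one y
            calc (N:ℝ) * Int.fract y < (N:ℝ) * 1 := by
                  exact mul_lt_mul_of_pos_left this hNR
              _ = ((N:ℤ):ℝ) := by push_cast; ring)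
      obtain ⟨hA0, hAN⟩ := hfl a
      obtain ⟨hB0, hBN⟩ := hfl b
      have e1 : (⌊(N:ℝ) * Int.fract a⌋).toNat % N = (⌊(N:ℝ) * Int.fract a⌋).toNat :=
        Nat.mod_eq_of_lt (by omega)
      have e2 : (⌊(N:ℝ) * Int.fract b⌋).toNat % N = (⌊(N:ℝ) * Int.fract b⌋).toNat :=
        Nat.mod_eq_of_lt (by omega)
      rw [e1, e2] at hcong
      have hfloors : ⌊(N:ℝ) * Int.fract a⌋ = ⌊(N:ℝ) * Int.fract b⌋ := by omega
      -- fract difference small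
      have h1 := Int.floor_le ((N:ℝ) * Int.fract a)
      have h2 := Int.lt_floor_add_one ((N:ℝ) * Int.fract a)
      have h3 := Int.floor_le ((N:ℝ) * Int.fract b)
      have h4 := Int.lt_floor_add_one ((N:ℝ) * Int.fract b)
      rw [hfloors] at h1 h2
      have hd1 : Int.fract b - Int.fract a < 1 / N := by
        rw [lt_div_iff₀ hNR]; nlinarith
      have hd2 : Int.fract a - Int.fract b < 1 / N := by
        rw [lt_div_iff₀ hNR]; nlinarith
      -- T * x j = b - a
      have hc : (b : ℝ) - a = (T : ℝ) * x j := by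
        have : ((q*(t0*i') : ℕ) : ℝ) = ((q*(t0*i) : ℕ) : ℝ) + (T : ℝ) := by
          exact_mod_cast congrArg (Nat.cast : ℕ → ℝ) hkey.symm
        rw [ha, hb, this]; ring
      rw [← hc, fract_sub_fract]
      set d0 := Int.fract b - Int.fract a with hd0
      rcases le_or_gt 0 d0 with h0 | h0
      · left
        rw [Int.fract_eq_self.mpr ⟨h0, by linarith⟩]
        linarith
      · right
        have : Int.fract d0 = d0 + 1 := by
          have h5 : Int.fract (d0 + (1:ℤ)) = Int.fract d0 := Int.fract_add_intCast d0 1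
          have h6 : Int.fract (d0 + (1:ℝ)) = d0 + 1 :=
            Int.fract_eq_self.mpr ⟨by linarith, by linarith⟩
          rw [← h6]; exact_mod_cast h5.symm
        rw [this]
        linarith
    by_contra h
    rw [Set.not_infinite] at h
    obtain ⟨B, hB⟩ := h.bddAbove
    obtain ⟨T, h1, h2⟩ := key B
    exact absurd (hB h2) (by omega)

open scoped Classical in

noncomputable def patt (k : ℕ) (x : ℕ → ℝ) (T : ℕ) : Finset ℕ :=
  (Finset.Icc 1 k).filter (fun j => 1/2 < Int.fract ((T : ℝ) * x j))

def good (k : ℕ) (x : ℕ → ℝ) (n : ℕ) (δ : ℝ) (T : ℕ) : Prop :=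
  0 < T ∧ 2 * n ∣ T ∧ ∀ j ∈ Finset.Icc 1 k,
    Int.fract ((T : ℝ) * x j) < δ ∨ 1 - δ < Int.fract ((T : ℝ) * x j)

def Ach (k : ℕ) (x : ℕ → ℝ) (S : Finset ℕ) : Prop :=
  ∀ n : ℕ, ∀ δ : ℝ, 0 < n → 0 < δ →
    {T : ℕ | good k x n δ T ∧ patt k x T = S}.Infinite

lemma patt_subset (k : ℕ) (x : ℕ → ℝ) (T : ℕ) : patt k x T ⊆ Finset.Icc 1 k :=
  Finset.filter_subset _ _

lemma exists_ach (k : ℕ) (x : ℕ → ℝ) : ∃ S, S ⊆ Finset.Icc 1 k ∧ Ach k x S := by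
  by_contra hcon
  push_neg at hcon
  have hex : ∀ S : Finset ℕ, ∃ n : ℕ, ∃ δ : ℝ, 0 < n ∧ 0 < δ ∧
      {T : ℕ | good k x n δ T ∧ patt k x T = S}.Finite := by
    intro S
    by_cases hS : S ⊆ Finset.Icc 1 k
    · have := hcon S hS
      unfold Ach at this
      push_neg at this
      obtain ⟨n, δ, hn, hδ, hfin⟩ := this
      exact ⟨n, δ, hn, hδ, hfin⟩
    · refine ⟨1, 1, one_pos, one_pos, ?_⟩
      convert Set.finite_empty
      ext T
      simp only [Set.mem_setOf_eq, Set.mem_empty_iff_false, iff_false, not_and]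
      intro _ hpat
      exact hS (hpat ▸ patt_subset k x T)
  choose nf δf hnf hδf hfin using hex
  set P := (Finset.Icc 1 k).powerset with hP
  set nstar := ∏ S ∈ P, nf S with hnstar
  have hnstar_pos : 0 < nstar := Finset.prod_pos (fun S _ => hnf S)
  have hPne : P.Nonempty := ⟨∅, Finset.empty_mem_powerset _⟩
  set δstar := P.inf' hPne δf with hδstar
  have hδstar_pos : 0 < δstar := by
    rw [hδstar, Finset.lt_inf'_iff]
    exact fun S _ => hδf S
  have hinf := recur k (2 * nstar) (by omega) x δstar hδstar_pos
  have hsub : {T : ℕ | 0 < T ∧ 2 * nstar ∣ T ∧ ∀ j ∈ Finset.Icc 1 k,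
        Int.fract ((T : ℝ) * x j) < δstar ∨ 1 - δstar < Int.fract ((T : ℝ) * x j)}
      ⊆ ⋃ S ∈ P, {T : ℕ | good k x (nf S) (δf S) T ∧ patt k x T = S} := by
    intro T ⟨hT0, hTd, hTf⟩
    have hmem : patt k x T ∈ P := Finset.mem_powerset.mpr (patt_subset k x T)
    refine Set.mem_biUnion hmem ?_
    refine ⟨⟨hT0, ?_, ?_⟩, rfl⟩
    · exact dvd_trans (mul_dvd_mul_left 2 (Finset.dvd_prod_of_mem nf hmem)) hTd
    · intro j hj
      have hle : δstar ≤ δf (patt k x T) := Finset.inf'_le _ hmem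
      rcases hTf j hj with h | h
      · exact Or.inl (lt_of_lt_of_le h hle)
      · exact Or.inr (by linarith)
  have hfin2 : (⋃ S ∈ P, {T : ℕ | good k x (nf S) (δf S) T ∧ patt k x T = S}).Finite :=
    Set.Finite.biUnion P.finite_toSet (fun S _ => hfin S)
  exact hinf (hfin2.subset hsub)

open scoped Classical in

lemma fract_of_neg {d : ℝ} (h1 : -1 < d) (h2 : d < 0) : Int.fract d = d + 1 := by
  have h5 : Int.fract (d + (1 : ℤ)) = Int.fract d := Int.fract_add_intCast d 1
  have h6 : Int.fract (d + (1 : ℝ)) = d + 1 :=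
    Int.fract_eq_self.mpr ⟨by linarith, by linarith⟩
  rw [← h6]; exact_mod_cast h5.symm

lemma ach_compl (k : ℕ) (hk : 1 ≤ k) (x : ℕ → ℝ)
    (hirr : ∀ j ∈ Finset.Icc 1 k, Irrational (x j))
    (S : Finset ℕ) (hach : Ach k x S) : Ach k x (Finset.Icc 1 k \ S) := by
  intro n δ hn hδ
  set δ₁ := min δ (1/2) with hδ₁
  have hδ₁pos : 0 < δ₁ := lt_min hδ (by norm_num)
  have hδ₁le : δ₁ ≤ 1/2 := min_le_right _ _
  have hδ₁δ : δ₁ ≤ δ := min_le_left _ _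
  have hJne : (Finset.Icc 1 k).Nonempty := ⟨1, Finset.mem_Icc.mpr ⟨le_refl 1, hk⟩⟩
  -- enough to do it for δ₁
  suffices h : {T : ℕ | good k x n δ₁ T ∧ patt k x T = Finset.Icc 1 k \ S}.Infinite by
    apply h.mono
    rintro T ⟨⟨hT0, hTd, hTf⟩, hTp⟩
    refine ⟨⟨hT0, hTd, fun j hj => ?_⟩, hTp⟩
    rcases hTf j hj with h' | h'
    · exact Or.inl (lt_of_lt_of_le h' hδ₁δ)
    · exact Or.inr (by linarith)
  -- get T₁ with pattern S and smallness δ₁/2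
  obtain ⟨T₁, ⟨hT₁0, hT₁d, hT₁f⟩, hT₁p⟩ := (hach n (δ₁/2) hn (by positivity)).nonempty
  set η := (Finset.Icc 1 k).inf' hJne
    (fun j => min (Int.fract ((T₁ : ℝ) * x j)) (1 - Int.fract ((T₁ : ℝ) * x j))) with hη
  have hηpos : 0 < η := by
    rw [hη, Finset.lt_inf'_iff]
    intro j hj
    have hi : Irrational ((T₁ : ℝ) * x j) := (hirr j hj).natCast_mul (by omega)
    exact lt_min (fract_pos_of_irrational hi) (by linarith [Int.fract_lt_one ((T₁:ℝ) * x j)])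
  have hηle : ∀ j ∈ Finset.Icc 1 k,
      η ≤ Int.fract ((T₁ : ℝ) * x j) ∧ η ≤ 1 - Int.fract ((T₁ : ℝ) * x j) := by
    intro j hj
    have := Finset.inf'_le (b := j)
      (f := fun j => min (Int.fract ((T₁ : ℝ) * x j)) (1 - Int.fract ((T₁ : ℝ) * x j))) hj
    exact ⟨le_trans this (min_le_left _ _), le_trans this (min_le_right _ _)⟩
  set ρ := min (η/2) (δ₁/4) with hρ
  have hρpos : 0 < ρ := lt_min (by positivity) (by positivity)
  have hρη : ρ ≤ η/2 := min_le_left _ _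
  have hρδ : ρ ≤ δ₁/4 := min_le_right _ _
  have hbase := (recur k (2*n) (by omega) x ρ hρpos).diff (Set.finite_le_nat T₁)
  have hinj : Set.InjOn (· - T₁)
      ({R : ℕ | 0 < R ∧ 2*n ∣ R ∧ ∀ j ∈ Finset.Icc 1 k,
        Int.fract ((R : ℝ) * x j) < ρ ∨ 1 - ρ < Int.fract ((R : ℝ) * x j)}
        \ {R | R ≤ T₁}) := by
    intro a ha b hb hab
    simp only [Set.mem_diff, Set.mem_setOf_eq, not_le] at ha hb
    simp only [] at hab
    omega
  apply (hbase.image hinj).mono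
  rintro T ⟨R, hR, rfl⟩
  simp only [Set.mem_diff, Set.mem_setOf_eq, not_le] at hR
  obtain ⟨⟨hR0, hRd, hRf⟩, hRgt⟩ := hR
  have hcast : ((R - T₁ : ℕ) : ℝ) = (R : ℝ) - (T₁ : ℝ) := by
    push_cast [Nat.cast_sub hRgt.le]; ring
  -- per coordinate analysis
  have hval : ∀ j ∈ Finset.Icc 1 k,
      (j ∈ S ∧ Int.fract (((R - T₁ : ℕ) : ℝ) * x j) < δ₁ ∧
        Int.fract (((R - T₁ : ℕ) : ℝ) * x j) ≤ 1/2) ∨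
      (j ∉ S ∧ 1 - δ₁ < Int.fract (((R - T₁ : ℕ) : ℝ) * x j) ∧
        1/2 < Int.fract (((R - T₁ : ℕ) : ℝ) * x j)) := by
    intro j hj
    set a := Int.fract ((T₁ : ℝ) * x j) with hadef
    set b := Int.fract ((R : ℝ) * x j) with hbdef
    have hfr : Int.fract (((R - T₁ : ℕ) : ℝ) * x j) = Int.fract (b - a) := by
      rw [show ((R - T₁ : ℕ) : ℝ) * x j = (R : ℝ) * x j - (T₁ : ℝ) * x j by
        rw [hcast]; ring, fract_sub_fract]
    have hmemS : j ∈ S ↔ 1/2 < a := by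
      rw [← hT₁p]
      simp [patt, Finset.mem_filter, hj, hadef]
    have ha1 := hT₁f j hj
    have hb1 := hRf j hj
    obtain ⟨hηa, hηa'⟩ := hηle j hj
    have hb0 : 0 ≤ b := Int.fract_nonneg _
    have hb2 : b < 1 := Int.fract_lt_one _
    rw [hfr]
    by_cases hjS : j ∈ S
    · left
      refine ⟨hjS, ?_⟩
      have haS : 1 - δ₁/2 < a := by
        rcases ha1 with h' | h'
        · exfalso; rw [hmemS] at hjS; linarith
        · exact h'
      rcases hb1 with hb' | hb'
      · -- b small:  fract = b - a + 1
        have hneg : b - a < 0 := by linarith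
        have hgt : -1 < b - a := by linarith [Int.fract_lt_one ((T₁:ℝ) * x j)]
        rw [fract_of_neg hgt hneg]
        constructor <;> linarith
      · -- b near 1 : fract = b - a ∈ (0, δ₁/2)
        have h0 : 0 ≤ b - a := by linarith
        have h1 : b - a < 1 := by linarith
        rw [Int.fract_eq_self.mpr ⟨h0, h1⟩]
        constructor <;> linarith
    · right
      refine ⟨hjS, ?_⟩
      have haS : a < δ₁/2 := by
        rcases ha1 with h' | h'
        · exact h'
        · exfalso; rw [hmemS] at hjS; push_neg at hjS; linarith
      rcases hb1 with hb' | hb'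
      · -- b small : fract = 1 + b - a
        have hneg : b - a < 0 := by linarith
        have hgt : -1 < b - a := by linarith
        rw [fract_of_neg hgt hneg]
        constructor <;> linarith
      · -- b near 1 : fract = b - a
        have h0 : 0 ≤ b - a := by linarith
        have h1 : b - a < 1 := by linarith
        rw [Int.fract_eq_self.mpr ⟨h0, h1⟩]
        constructor <;> linarith
  show good k x n δ₁ (R - T₁) ∧ patt k x (R - T₁) = Finset.Icc 1 k \ S
  refine ⟨⟨Nat.sub_pos_of_lt hRgt, ?_, fun j hj => ?_⟩, ?_⟩
  · exact (Nat.dvd_sub hRd hT₁d)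
  · rcases hval j hj with ⟨_, h1, _⟩ | ⟨_, h1, _⟩
    · exact Or.inl h1
    · exact Or.inr h1
  · ext j
    simp only [patt, Finset.mem_filter, Finset.mem_sdiff]
    constructor
    · rintro ⟨hj, hhalf⟩
      refine ⟨hj, ?_⟩
      rcases hval j hj with ⟨_, _, h2⟩ | ⟨hns, _, _⟩
      · exact absurd hhalf (not_lt.mpr h2)
      · exact hns
    · rintro ⟨hj, hns⟩
      refine ⟨hj, ?_⟩
      rcases hval j hj with ⟨hs, _, _⟩ | ⟨_, _, h2⟩
      · exact absurd hs hns
      · exact h2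

open scoped Classical in

lemma main_aux (k : ℕ) (hk : 1 ≤ k) (x : ℕ → ℝ)
    (hirr' : ∀ j ∈ Finset.Icc 1 k, Irrational (x j))
    (S : Finset ℕ) (hSsub : S ⊆ Finset.Icc 1 k) (hach : Ach k x S) :
    ∀ n m₀ : ℕ, 0 < n → 0 < m₀ →
      {T : ℕ | 0 < T ∧ Even T ∧ n ∣ T ∧
        ∀ m : ℕ, 1 ≤ m → m ≤ m₀ →
          ∑ j ∈ Finset.Icc 1 k,
              (⌈((m : ℝ) + (T : ℝ)) * x j⌉ - ⌈(m : ℝ) * x j⌉ - ⌈(T : ℝ) * x j⌉)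
            = (S.card : ℤ) - (k : ℤ)}.Infinite := by
  intro n m₀ hn hm₀
  set M := (Finset.Icc 1 m₀) ×ˢ (Finset.Icc 1 k) with hM
  have hMne : M.Nonempty :=
    ⟨(1,1), Finset.mem_product.mpr ⟨Finset.mem_Icc.mpr ⟨le_refl 1, hm₀⟩,
      Finset.mem_Icc.mpr ⟨le_refl 1, hk⟩⟩⟩
  set δ₀ := M.inf' hMne
    (fun p => min (Int.fract ((p.1 : ℝ) * x p.2)) (1 - Int.fract ((p.1 : ℝ) * x p.2)))
    with hδ₀
  have hδ₀pos : 0 < δ₀ := by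
    rw [hδ₀, Finset.lt_inf'_iff]
    rintro ⟨m, j⟩ hp
    rw [hM, Finset.mem_product, Finset.mem_Icc, Finset.mem_Icc] at hp
    have hi : Irrational ((m : ℝ) * x j) :=
      (hirr' j (Finset.mem_Icc.mpr hp.2)).natCast_mul (by omega)
    exact lt_min (fract_pos_of_irrational hi)
      (by linarith [Int.fract_lt_one ((m:ℝ) * x j)])
  set δ' := min δ₀ (1/2) with hδ'
  have hδ'pos : 0 < δ' := lt_min hδ₀pos (by norm_num)
  have hδ'le : δ' ≤ 1/2 := min_le_right _ _
  have hδ'δ₀ : δ' ≤ δ₀ := min_le_left _ _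
  apply (hach n δ' hn hδ'pos).mono
  rintro T ⟨⟨hT0, hTd, hTf⟩, hTp⟩
  refine ⟨hT0, ?_, ?_, ?_⟩
  · exact (even_iff_two_dvd).mpr (dvd_trans ⟨n, rfl⟩ hTd)
  · exact dvd_trans ⟨2, mul_comm 2 n⟩ hTd
  · intro m hm1 hm2
    have hterm : ∀ j ∈ Finset.Icc 1 k,
        ⌈((m : ℝ) + (T : ℝ)) * x j⌉ - ⌈(m : ℝ) * x j⌉ - ⌈(T : ℝ) * x j⌉
          = if j ∈ S then (0 : ℤ) else -1 := by
      intro j hj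
      have hxj := hirr' j hj
      have irr_m : Irrational ((m : ℝ) * x j) := hxj.natCast_mul (by omega)
      have irr_T : Irrational ((T : ℝ) * x j) := hxj.natCast_mul (by omega)
      have irr_sum : Irrational ((m : ℝ) * x j + (T : ℝ) * x j) := by
        have h1 : (m : ℝ) * x j + (T : ℝ) * x j = ((m + T : ℕ) : ℝ) * x j := by
          push_cast; ring
        rw [h1]
        exact hxj.natCast_mul (by omega)
      have hsplit : ((m : ℝ) + (T : ℝ)) * x j = (m : ℝ) * x j + (T : ℝ) * x j := by ring
      have hmem : (m, j) ∈ M := by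
        rw [hM, Finset.mem_product]
        exact ⟨Finset.mem_Icc.mpr ⟨hm1, hm2⟩, hj⟩
      have hule := Finset.inf'_le
        (f := fun p : ℕ × ℕ =>
          min (Int.fract ((p.1 : ℝ) * x p.2)) (1 - Int.fract ((p.1 : ℝ) * x p.2))) hmem
      have hu1 : δ₀ ≤ Int.fract ((m : ℝ) * x j) := le_trans hule (min_le_left _ _)
      have hu2 : δ₀ ≤ 1 - Int.fract ((m : ℝ) * x j) := le_trans hule (min_le_right _ _)
      have hv := hTf j hj
      have hmemS : j ∈ S ↔ 1/2 < Int.fract ((T : ℝ) * x j) := by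
        rw [← hTp]
        simp [patt, Finset.mem_filter, hj]
      rw [hsplit]
      by_cases hjS : j ∈ S
      · rw [if_pos hjS]
        have hv2 : 1 - δ' < Int.fract ((T : ℝ) * x j) := by
          rcases hv with h' | h'
          · exfalso; rw [hmemS] at hjS; linarith
          · exact h'
        exact ceil_sub_gt irr_m irr_T irr_sum (by linarith)
      · rw [if_neg hjS]
        have hv2 : Int.fract ((T : ℝ) * x j) < δ' := by
          rcases hv with h' | h'
          · exact h'
          · exfalso; rw [hmemS] at hjS; push_neg at hjS; linarith
        exact ceil_sub_lt irr_m irr_T irr_sum (by linarith)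
    rw [Finset.sum_congr rfl hterm]
    have hsimp : ∀ j : ℕ, (if j ∈ S then (0:ℤ) else -1) = (if j ∈ S then (1:ℤ) else 0) - 1 := by
      intro j; split <;> ring
    simp_rw [hsimp]
    rw [Finset.sum_sub_distrib, Finset.sum_ite_mem, Finset.inter_eq_right.mpr hSsub]
    simp [Nat.card_Icc]

/-- For `k ≥ 1` and irrational reals `x₁,…,x_k` there exists `A` with
`⌊(k+1)/2⌋ ≤ A ≤ k` such that for all positive integers `n, m₀` there are infinitely
many even positive multiples `T` of `n` with
`∑_{j=1}^k (⌈(m+T)x_j⌉ - ⌈m x_j⌉ - ⌈T x_j⌉) = A - k` for every `1 ≤ m ≤ m₀`. -/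
theorem stmt_14 (k : ℕ) (hk : 1 ≤ k) (x : ℕ → ℝ)
    (hirr : ∀ j : ℕ, 1 ≤ j → j ≤ k → Irrational (x j)) :
    ∃ A : ℕ, (k + 1) / 2 ≤ A ∧ A ≤ k ∧
      ∀ n m₀ : ℕ, 0 < n → 0 < m₀ →
        {T : ℕ | 0 < T ∧ Even T ∧ n ∣ T ∧
          ∀ m : ℕ, 1 ≤ m → m ≤ m₀ →
            ∑ j ∈ Finset.Icc 1 k,
                (⌈((m : ℝ) + (T : ℝ)) * x j⌉ - ⌈(m : ℝ) * x j⌉ - ⌈(T : ℝ) * x j⌉)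
              = (A : ℤ) - (k : ℤ)}.Infinite := by
  have hirr' : ∀ j ∈ Finset.Icc 1 k, Irrational (x j) := by
    intro j hj
    rw [Finset.mem_Icc] at hj
    exact hirr j hj.1 hj.2
  obtain ⟨S, hSsub, hachS⟩ := exists_ach k x
  have hScard : S.card ≤ k := by
    have := Finset.card_le_card hSsub
    simpa [Nat.card_Icc] using this
  by_cases hbig : k ≤ 2 * S.card
  · exact ⟨S.card, by omega, hScard, main_aux k hk x hirr' S hSsub hachS⟩
  · have hcard : (Finset.Icc 1 k \ S).card = k - S.card := by
      rw [Finset.card_sdiff_of_subset hSsub, Nat.card_Icc]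
      omega
    refine ⟨k - S.card, by omega, by omega, ?_⟩
    have hres := main_aux k hk x hirr' (Finset.Icc 1 k \ S)
      (Finset.sdiff_subset) (ach_compl k hk x hirr' S hachS)
    rw [hcard] at hres
    exact hres
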